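/- arXiv:2503.06143 — 3 statements merged into one kernel-verified Lean document; each statement's English description precedes it below -/
import Mathlib

section
/- For all integers m ≥ 3, f((m²+m)/2) − m² > 0, where f(n) = (n²−n+2)/2; equivalently, the Lorentz cone of dimension (m²+m)/2 has strictly larger Lyapunov rank than the m×m real symmetric PSD cone (whose Lyapunov rank is m²). -/
def lyap (m : ℤ) : ℤ := (m^2 - m + 2) / 2

theorem lorentz_beats_real_psd (m : ℤ) (hm : 3 ≤ m) :
    0 < lyap ((m^2 + m) / 2) - m^2 := by
  obtain ⟨k, hk⟩ : 2 ∣ m^2 + m := by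
    rcases Int.even_or_odd m with ⟨a, ha⟩ | ⟨a, ha⟩
    · exact ⟨2*a^2 + a, by subst ha; ring⟩
    · exact ⟨2*a^2 + 3*a + 1, by subst ha; ring⟩
  rw [hk, Int.mul_ediv_cancel_left _ (by norm_num)]
  unfold lyap
  obtain ⟨j, hj⟩ : 2 ∣ k^2 - k + 2 := by
    rcases Int.even_or_odd k with ⟨a, ha⟩ | ⟨a, ha⟩
    · exact ⟨2*a^2 - a + 1, by subst ha; ring⟩
    · exact ⟨2*a^2 + a + 1, by subst ha; ring⟩
  rw [hj, Int.mul_ediv_cancel_left _ (by norm_num)]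
  nlinarith [sq_nonneg (k - m), sq_nonneg m, sq_nonneg (m - 3)]
end

section
/- For every integer n ≥ 4, the direct sum L₊^{n+1} ⊕ L₊^{n+1} ⊕ ℝ₊^{n²−5n+6} ⊕ L₊^4 ⊕ (n−4 copies of L₊^3) has the same dimension and Lyapunov rank as the n×n complex Hermitian PSD cone, namely dimension n² and Lyapunov rank 2n²−1. -/
theorem complex_psd_simulacrum (n : ℤ) (hn : 4 ≤ n) :
    (n + 1) + (n + 1) + (n^2 - 5 * n + 6) + 4 + (n - 4) * 3 = n^2 ∧
    lyap (n + 1) + lyap (n + 1) + (n^2 - 5 * n + 6) + lyap 4 + (n - 4) * lyap 3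
      = 2 * n^2 - 1 := by
  obtain ⟨m, hm⟩ := Int.even_mul_succ_self n
  have h1 : lyap (n + 1) = m + 1 := by
    unfold lyap
    have : (n + 1)^2 - (n + 1) + 2 = 2 * (m + 1) := by ring_nf; nlinarith [hm]
    rw [this, Int.mul_ediv_cancel_left _ (by norm_num)]
  have h3 : lyap 3 = 4 := by decide
  have h4 : lyap 4 = 7 := by decide
  constructor
  · ring
  · rw [h1, h3, h4]; nlinarith [hm]
end

section
/- Let d, r, n, k be integers with k ≥ 2, n satisfying n ≥ 2 + r − d, n ≥ 2 + f(1+d) − r, and n ≥ 15, where f(m) = (m²−m+2)/2 and r ≥ d ≥ 0. Then for all positive integers n₁ ≥ n₂ ≥ ⋯ ≥ n_k with each nᵢ < n and n₁+⋯+n_k = d + n, we have f(n₁)+⋯+f(n_k) < r + f(n). -/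
lemma two_lyap (m : ℤ) : 2 * lyap m = m^2 - m + 2 := by
  have h : (2:ℤ) ∣ m^2 - m + 2 := by
    obtain ⟨c, hc⟩ := Int.even_mul_succ_self (m - 1)
    exact ⟨c + 1, by linear_combination hc⟩
  unfold lyap
  exact Int.mul_ediv_cancel' h

lemma lyap_add (a b : ℤ) (ha : 1 ≤ a) (hb : 1 ≤ b) :
    lyap a + lyap b ≤ lyap (a + b) := by
  nlinarith [two_lyap a, two_lyap b, two_lyap (a + b)]

lemma lyap_spread (n a b : ℤ) (ha : a ≤ n - 1) (hb : b ≤ n - 1) :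
    lyap a + lyap b ≤ lyap (n - 1) + lyap (a + b - n + 1) := by
  nlinarith [two_lyap a, two_lyap b, two_lyap (n - 1), two_lyap (a + b - n + 1),
    mul_nonneg (by linarith : (0:ℤ) ≤ n - 1 - a) (by linarith : (0:ℤ) ≤ n - 1 - b)]

lemma sum_lyap_le (l : List ℤ) (h : ∀ x ∈ l, 1 ≤ x) (hne : l ≠ []) :
    (l.map lyap).sum ≤ lyap l.sum := by
  induction l with
  | nil => simp at hne
  | cons a t ih =>
    rcases t.eq_nil_or_concat with ht | _
    · subst ht; simp
    · have hta : ∀ x ∈ t, 1 ≤ x := fun x hx => h x (List.mem_cons_of_mem _ hx)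
      have htne : t ≠ [] := by rintro rfl; simp_all
      have h1 : 1 ≤ t.sum := by
        rcases t with _ | ⟨b, t'⟩
        · simp_all
        · have : 0 ≤ t'.sum := List.sum_nonneg fun x hx => by
            have := hta x (List.mem_cons_of_mem _ hx); linarith
          have := hta b (List.mem_cons_self)
          simp only [List.sum_cons]; linarith
      have := ih hta htne
      have hsup := lyap_add a t.sum (h a (List.mem_cons_self)) h1
      simp only [List.map_cons, List.sum_cons]
      linarith

lemma lemB (n : ℤ) : ∀ (m : ℕ) (l : List ℤ), l.length ≤ m → 2 ≤ l.length →
    (∀ x ∈ l, 1 ≤ x) → (∀ x ∈ l, x ≤ n - 1) → n ≤ l.sum →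
    (l.map lyap).sum ≤ lyap (n - 1) + lyap (l.sum - n + 1) := by
  intro m
  induction m with
  | zero => intro l hlen h2; omega
  | succ m ih =>
    intro l hlen h2 h1 hub hs
    match l with
    | [a, b] =>
      simp only [List.map_cons, List.map_nil, List.sum_cons, List.sum_nil, add_zero]
      have ha := hub a (by simp)
      have hb := hub b (by simp)
      exact lyap_spread n a b ha hb
    | a :: b :: c :: t =>
      have ha1 := h1 a (by simp)
      have hb1 := h1 b (by simp)
      have hau := hub a (by simp)
      have hbu := hub b (by simp)
      by_cases hab : a + b ≤ n - 1
      · have hlen' : ((a + b) :: c :: t).length ≤ m := by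
          simp at hlen ⊢; omega
        have h1' : ∀ x ∈ (a + b) :: c :: t, 1 ≤ x := by
          intro x hx
          rcases List.mem_cons.mp hx with rfl | hx
          · linarith
          · exact h1 x (by simp [hx])
        have hub' : ∀ x ∈ (a + b) :: c :: t, x ≤ n - 1 := by
          intro x hx
          rcases List.mem_cons.mp hx with rfl | hx
          · exact hab
          · exact hub x (by simp [hx])
        have hs' : n ≤ ((a + b) :: c :: t).sum := by
          simp only [List.sum_cons] at hs ⊢; linarith
        have := ih ((a + b) :: c :: t) hlen' (by simp) h1' hub' hs'
        have hadd := lyap_add a b ha1 hb1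
        have hsumeq : ((a + b) :: c :: t).sum = (a :: b :: c :: t).sum := by
          simp only [List.sum_cons]; ring
        rw [hsumeq] at this
        simp only [List.map_cons, List.sum_cons] at this ⊢
        linarith
      · have hspread := lyap_spread n a b hau hbu
        have h1' : ∀ x ∈ (a + b - n + 1) :: c :: t, 1 ≤ x := by
          intro x hx
          rcases List.mem_cons.mp hx with rfl | hx
          · omega
          · exact h1 x (by simp [hx])
        have hrest := sum_lyap_le ((a + b - n + 1) :: c :: t) h1' (by simp)
        have hsumeq : ((a + b - n + 1) :: c :: t).sum = (a :: b :: c :: t).sum - n + 1 := by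
          simp only [List.sum_cons]; ring
        rw [hsumeq] at hrest
        simp only [List.map_cons, List.sum_cons] at hrest ⊢
        linarith

theorem not_all_smaller_factors (d r n : ℤ) (k : ℕ) (hk : 2 ≤ k)
    (hd : 0 ≤ d) (hrd : d ≤ r)
    (h1 : n ≥ 2 + r - d) (h2 : n ≥ 2 + lyap (1 + d) - r) (h3 : n ≥ 15)
    (N : Fin k → ℤ) (hpos : ∀ i, 1 ≤ N i) (hlt : ∀ i, N i < n)
    (hmono : ∀ i j : Fin k, i ≤ j → N j ≤ N i)
    (hsum : ∑ i, N i = d + n) :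
    ∑ i, lyap (N i) < r + lyap n := by
  set l := List.ofFn N with hl
  have hsuml : l.sum = d + n := by rw [hl, List.sum_ofFn]; exact hsum
  have hmapl : (l.map lyap).sum = ∑ i, lyap (N i) := by
    rw [hl, List.map_ofFn, List.sum_ofFn]; rfl
  have hB := lemB n l.length l le_rfl
    (by rw [hl, List.length_ofFn]; exact hk)
    (by intro x hx; obtain ⟨i, rfl⟩ := (List.mem_ofFn).mp (hl ▸ hx); exact hpos i)
    (by intro x hx; obtain ⟨i, rfl⟩ := (List.mem_ofFn).mp (hl ▸ hx); have := hlt i; omega)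
    (by rw [hsuml]; linarith)
  rw [hmapl, hsuml] at hB
  have he : d + n - n + 1 = d + 1 := by ring
  rw [he] at hB
  have h1d : (1 : ℤ) + d = d + 1 := by ring
  rw [h1d] at h2
  have := two_lyap n
  have := two_lyap (n - 1)
  linarith
end
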